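/- arXiv:1102.0647 — 2 statements merged into one kernel-verified Lean document; each statement's English description precedes it below -/
import Mathlib

section
/- Let Y be a G-space for a finite group G, let θ be a cohomology class of positive degree in H*_G(Y; F_p), let m ≥ 1, and suppose θ^m ≠ 0 in H*_G(Y; F_p). Let f : Y → V be a G-equivariant continuous map to a G-representation V whose equivariant Euler class restricted to Y equals θ, and let Z_f = f^{-1}(0). If the restriction of θ to Y \ Z_f is zero, then the restriction of θ^{m-1} to Z_f is nonzero (using Čech/Alexander–Spanier cohomology and the multiplicative structure of relative cohomology). -/
/-- Let `Y` be a `G`-space, `f : Y → V` a `G`-equivariant continuous map to a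
`G`-representation `V`, and `Z_f = f⁻¹(0)`. Model the Borel equivariant Čech cohomology
ring `H*_G(Y; F_p)` by a commutative ring `R`, with restriction ring homomorphisms
`resZ` to `Z_f` and `resC` to `Y \ Z_f`, satisfying the multiplicative key property of
Čech cohomology: if `a` vanishes on `Y \ Z_f` and `b` vanishes on `Z_f` then `a * b = 0`.
If `θ ∈ R` satisfies `θ^m ≠ 0` (`m ≥ 1`) and the restriction of `θ` to `Y \ Z_f` is zero,
then the restriction of `θ^{m-1}` to `Z_f` is nonzero. -/
theorem zero_set_power_nonzero {G : Type*} [Group G]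
    {Y : Type*} [TopologicalSpace Y] [MulAction G Y]
    {V : Type*} [AddCommGroup V] [Module ℝ V] [TopologicalSpace V] [DistribMulAction G V]
    (f : Y → V) (hf : Continuous f) (hfequiv : ∀ (g : G) (y : Y), f (g • y) = g • f y)
    (R RZ RC : Type*) [CommRing R] [CommRing RZ] [CommRing RC]
    (resZ : R →+* RZ)   -- restriction to `Z_f = f⁻¹(0)`
    (resC : R →+* RC)   -- restriction to `Y \ Z_f`
    (hkey : ∀ a b : R, resC a = 0 → resZ b = 0 → a * b = 0)
    (θ : R) (m : ℕ) (hm : 1 ≤ m) (hθ : θ ^ m ≠ 0) (hvanish : resC θ = 0) :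
    resZ (θ ^ (m - 1)) ≠ 0 := by
  intro h
  apply hθ
  have := hkey θ (θ ^ (m - 1)) hvanish h
  rwa [← pow_succ', Nat.sub_add_cancel hm] at this
end

section
/- (Bourgin–Yang type theorem) Let q = p^k, G a p-subgroup of Σ_q containing the regular p-torus T, Y a G-space with hind_{θ_G}(Y) = n ≥ m, and φ : Y → (ℝ^m)^q a G-equivariant map. Then the coincidence set C(φ) = φ^{-1}(Δ), where Δ is the diagonal of (ℝ^m)^q, is nonempty and satisfies hind_{θ_G}(C(φ)) ≥ n − m. -/
open Pointwise

/-- Bourgin–Yang type theorem. Let `q = p^k`, `G ⊆ Σ_q` a `p`-subgroup containing the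
regular `p`-torus `T ≅ (ℤ/p)^k`, `Y` a `G`-space and `φ : Y → (ℝ^m)^q` a `G`-equivariant
map (where `G` permutes the `q` factors). The predicate `NY A j` (resp. `NE B j`) encodes
`θ_G^j|_A ≠ 0` in Borel equivariant Čech cohomology with `F_p` coefficients, `θ_G` being
the mod-`p` Euler class of `α_q` restricted to `G`; in particular
`hind_{θ_G}((ℝ^m)^q \ Δ) = m - 1` and the index is monotone, antitone in the exponent and
subadditive. If `hind_{θ_G}(Y) = n ≥ m`, then `C(φ) = φ⁻¹(Δ)` is nonempty and
`hind_{θ_G}(C(φ)) ≥ n - m`. -/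
theorem bourginYang_euclidean (p k m : ℕ) [Fact p.Prime] (q : ℕ) (hq : q = p ^ k)
    (T G : Subgroup (Equiv.Perm (Fin q)))
    (hTtorus : Nonempty (T ≃* Multiplicative (Fin k → ZMod p)))
    (hTG : T ≤ G) (hGp : IsPGroup p G)
    {Y : Type*} [TopologicalSpace Y] [MulAction G Y]
    (φ : Y → (Fin q → EuclideanSpace ℝ (Fin m))) (hφc : Continuous φ)
    (hφe : ∀ (g : G) (y : Y) (i : Fin q), φ (g • y) ((g : Equiv.Perm (Fin q)) i) = φ y i)
    (Δ : Set (Fin q → EuclideanSpace ℝ (Fin m))) (hΔ : Δ = {x | ∀ i j, x i = x j})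
    (NY : Set Y → ℕ → Prop) (NE : Set (Fin q → EuclideanSpace ℝ (Fin m)) → ℕ → Prop)
    (hmono : ∀ (A : Set Y) B, Set.MapsTo φ A B → ∀ j, NY A j → NE B j)
    (hanti : ∀ (A : Set Y) (j l : ℕ), j ≤ l → NY A l → NY A j)
    (hempty : ∀ j, ¬ NY ∅ j)
    (hsub : ∀ A : Set Y, IsClosed A → (∀ g : G, g • A = A) →
      ∀ a b : ℕ, ¬ NY A a → ¬ NY Aᶜ b → ¬ NY Set.univ (a + b))
    (hΔind : ∀ j : ℕ, NE Δᶜ j ↔ j ≤ m - 1)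
    (n : ℕ) (hmn : m ≤ n) (hn : NY Set.univ n ∧ ¬ NY Set.univ (n + 1)) :
    (φ ⁻¹' Δ).Nonempty ∧ NY (φ ⁻¹' Δ) (n - m) := by
  set A : Set Y := φ ⁻¹' Δ with hA
  -- Aᶜ has trivial index
  have hAc : ¬ NY Aᶜ m := by
    intro h
    have hmap : Set.MapsTo φ Aᶜ Δᶜ := fun y hy => hy
    have hle := (hΔind m).1 (hmono _ _ hmap m h)
    have hm0 : m = 0 := by omega
    subst hm0
    have hAce : Aᶜ = (∅ : Set Y) := by
      ext y
      simp only [Set.mem_compl_iff, Set.mem_empty_iff_false, iff_false, not_not]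
      show φ y ∈ Δ
      rw [hΔ]
      intro i j
      exact Subsingleton.elim _ _
    rw [hAce] at h
    exact hempty 0 h
  have hΔclosed : IsClosed Δ := by
    rw [hΔ]
    have : {x : Fin q → EuclideanSpace ℝ (Fin m) | ∀ i j, x i = x j} =
        ⋂ i, ⋂ j, {x | x i = x j} := by
      ext x; simp [Set.mem_iInter]
    rw [this]
    exact isClosed_iInter fun i => isClosed_iInter fun j =>
      isClosed_eq (continuous_apply i) (continuous_apply j)
  have hAmem : ∀ (g : G) (y : Y), y ∈ A → g • y ∈ A := by
    intro g y hy
    have hy' : φ y ∈ Δ := hy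
    show φ (g • y) ∈ Δ
    rw [hΔ] at hy' ⊢
    intro i j
    have hi := hφe g y ((g : Equiv.Perm (Fin q)).symm i)
    have hj := hφe g y ((g : Equiv.Perm (Fin q)).symm j)
    rw [Equiv.apply_symm_apply] at hi hj
    rw [hi, hj]
    exact hy' _ _
  have hinv : ∀ g : G, g • A = A := by
    intro g
    apply le_antisymm
    · rintro _ ⟨y, hy, rfl⟩
      exact hAmem g y hy
    · intro y hy
      exact ⟨g⁻¹ • y, hAmem g⁻¹ y hy, by simp⟩
  have hNA : NY A (n - m) := by
    by_contra hNA
    have := hsub A (hΔclosed.preimage hφc) hinv (n - m) m hNA hAc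
    rw [Nat.sub_add_cancel hmn] at this
    exact this hn.1
  refine ⟨?_, hNA⟩
  by_contra hne
  rw [Set.not_nonempty_iff_eq_empty] at hne
  exact hempty _ (hne ▸ hNA)
end
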